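/- Let E be an abelian group with torsion subgroup T, let H ≤ E be a subgroup, and let q ∈ E. Let N₁ be the smallest positive integer such that N₁·q ∈ H + T, and write N₁·q = q_r + q_t with q_r ∈ H and q_t ∈ T. If m is a positive integer such that q_r ∈ m·H + T, then gcd(m, N₁) = 1. -/
import Mathlib


/-- The set of torsion elements of an additive abelian group. -/
def torsionSet (E : Type) [AddCommGroup E] : Set E :=
  {t : E | ∃ n : ℕ, 0 < n ∧ n • t = 0}

lemma torsionSet_add {E : Type} [AddCommGroup E] {a b : E}
    (ha : a ∈ torsionSet E) (hb : b ∈ torsionSet E) : a + b ∈ torsionSet E := by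
  obtain ⟨k, hk, hka⟩ := ha
  obtain ⟨l, hl, hlb⟩ := hb
  refine ⟨k * l, Nat.mul_pos hk hl, ?_⟩
  have h1 : (k * l) • a = 0 := by rw [mul_comm, mul_smul, hka, smul_zero]
  have h2 : (k * l) • b = 0 := by rw [mul_smul, hlb, smul_zero]
  rw [smul_add, h1, h2, add_zero]

lemma torsionSet_of_smul {E : Type} [AddCommGroup E] {d : ℕ} (hd : 0 < d) {x : E}
    (h : d • x ∈ torsionSet E) : x ∈ torsionSet E := by
  obtain ⟨k, hk, hkx⟩ := h
  exact ⟨k * d, Nat.mul_pos hk hd, by rw [mul_smul]; exact hkx⟩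

theorem stmt_10 (E : Type) [AddCommGroup E] (H : AddSubgroup E) (q : E)
    (N₁ : ℕ) (hN₁ : 0 < N₁)
    (q_r q_t : E) (hqr : q_r ∈ H) (hqt : q_t ∈ torsionSet E)
    (hsum : N₁ • q = q_r + q_t)
    (hmin : ∀ n : ℕ, 0 < n → (∃ h ∈ H, ∃ t ∈ torsionSet E, n • q = h + t) → N₁ ≤ n)
    (m : ℕ) (hm : 0 < m)
    (hdiv : ∃ h ∈ H, ∃ t ∈ torsionSet E, q_r = m • h + t) :
    Nat.gcd m N₁ = 1 := by
  obtain ⟨h, hh, t, ht, hqrt⟩ := hdiv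
  set d := Nat.gcd m N₁ with hd
  by_contra hne
  have hd0 : 0 < d := Nat.gcd_pos_of_pos_left _ hm
  have hd2 : 2 ≤ d := by omega
  have hdm : d ∣ m := Nat.gcd_dvd_left _ _
  have hdN : d ∣ N₁ := Nat.gcd_dvd_right _ _
  set n := N₁ / d with hn
  have hnN : d * n = N₁ := Nat.mul_div_cancel' hdN
  have hn0 : 0 < n := Nat.div_pos (Nat.le_of_dvd hN₁ hdN) hd0
  have hnlt : n < N₁ := by nlinarith
  set x := n • q - (m / d) • h with hx
  have hdx : d • x ∈ torsionSet E := by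
    have : d • x = t + q_t := by
      rw [hx, smul_sub, ← mul_smul, ← mul_smul, hnN,
        Nat.mul_div_cancel' hdm, hsum, hqrt]
      abel
    rw [this]
    exact torsionSet_add ht hqt
  have hxt : x ∈ torsionSet E := torsionSet_of_smul hd0 hdx
  have : N₁ ≤ n := hmin n hn0 ⟨(m / d) • h, AddSubgroup.nsmul_mem H hh _, x, hxt, by
    rw [hx]; abel⟩
  omega
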